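/- For every natural number l ≥ 1, ∫_{1}^{∞} Q_l(x) dx = 1/(l(l+1)), where Q_l is the Legendre function of the second kind. -/

import Mathlib

/-- The Legendre polynomials, via Bonnet's recursion. -/
noncomputable def legendreP : ℕ → ℝ → ℝ
  | 0, _ => 1
  | 1, t => t
  | (n + 2), t =>
      ((2 * (n : ℝ) + 3) * t * legendreP (n + 1) t - ((n : ℝ) + 1) * legendreP n t) /
        ((n : ℝ) + 2)

/-- The Legendre function of the second kind, via Neumann's integral. -/
noncomputable def legendreQ (l : ℕ) (z : ℝ) : ℝ :=
  (1 / 2) * ∫ t in (-1 : ℝ)..1, legendreP l t / (z - t)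

/-!
Legendre's equation `((t² - 1) P_l')' = l (l + 1) P_l` lets one integrate Neumann's integral by
parts: for `x > 1`, `Q_l(x) = (2 l (l + 1))⁻¹ ∫₋₁¹ (1 + t) P_l'(t) (1 - t) / (x - t)² dt`, the
boundary terms vanishing because `t² - 1` does. The kernel `(1 - t) / (x - t)²` has integral `1`
over `x > 1`, so by Fubini `∫₁^∞ Q_l = (2 l (l + 1))⁻¹ ∫₋₁¹ (1 + t) P_l'(t) dt`, and the last
integral is `2 P_l(1) - ∫₋₁¹ P_l = 2`, since `∫₋₁¹ P_l = 0` is again Legendre's equation.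
-/

open Polynomial MeasureTheory Set Filter Topology

noncomputable def legendrePoly : ℕ → ℝ[X]
  | 0 => 1
  | 1 => X
  | n + 2 => C ((n + 2 : ℝ)⁻¹) *
      (C (2 * (n : ℝ) + 3) * X * legendrePoly (n + 1) - C ((n : ℝ) + 1) * legendrePoly n)

theorem eval_legendrePoly (n : ℕ) (t : ℝ) : (legendrePoly n).eval t = legendreP n t := by
  induction n using Nat.strong_induction_on with
  | _ n ih =>
    match n with
    | 0 => simp [legendrePoly, legendreP]
    | 1 => simp [legendrePoly, legendreP]
    | m + 2 =>
      simp only [legendrePoly, legendreP, eval_mul, eval_sub, eval_C, eval_X,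
        ih m (by omega), ih (m + 1) (by omega)]
      ring

theorem legendrePoly_recurrence (n : ℕ) :
    ((n : ℝ[X]) + 2) * legendrePoly (n + 2) =
      (2 * (n : ℝ[X]) + 3) * X * legendrePoly (n + 1) - ((n : ℝ[X]) + 1) * legendrePoly n := by
  have hn : (n + 2 : ℝ) ≠ 0 := by positivity
  rw [legendrePoly, ← mul_assoc]
  have hinv : ((n : ℝ[X]) + 2) * C (n + 2 : ℝ)⁻¹ = 1 := by
    rw [show ((n : ℝ[X]) + 2) = C (n + 2 : ℝ) by simp [map_ofNat], ← C_mul, mul_inv_cancel₀ hn,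
      C_1]
  rw [hinv, one_mul]
  simp only [map_add, map_mul, map_natCast, map_ofNat, map_one]

theorem eval_one_legendrePoly (n : ℕ) : (legendrePoly n).eval 1 = 1 := by
  induction n using Nat.strong_induction_on with
  | _ n ih =>
    match n with
    | 0 => simp [legendrePoly]
    | 1 => simp [legendrePoly]
    | m + 2 =>
      have h := congrArg (eval 1) (legendrePoly_recurrence m)
      simp only [eval_mul, eval_add, eval_sub, eval_natCast, eval_ofNat, eval_X, eval_one,
        ih m (by omega), ih (m + 1) (by omega)] at h
      have hm : (m + 2 : ℝ) ≠ 0 := by positivity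
      exact mul_left_cancel₀ hm (by linear_combination h)

theorem derivative_legendrePoly_recurrences (n : ℕ) :
    derivative (legendrePoly (n + 1)) =
        X * derivative (legendrePoly n) + ((n : ℝ[X]) + 1) * legendrePoly n ∧
      derivative (legendrePoly n) =
        X * derivative (legendrePoly (n + 1)) - ((n : ℝ[X]) + 1) * legendrePoly (n + 1) := by
  induction n with
  | zero => constructor <;> simp [legendrePoly]
  | succ n ih =>
    obtain ⟨ha, hb⟩ := ih
    have hrec := legendrePoly_recurrence n
    have hrec' := congrArg derivative hrec
    simp only [derivative_mul, derivative_add, derivative_sub, derivative_natCast,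
      derivative_ofNat, derivative_X, derivative_one, zero_mul, zero_add, mul_zero, add_zero,
      mul_one] at hrec'
    have hne : (n : ℝ[X]) + 2 ≠ 0 := by
      rw [show ((n : ℝ[X]) + 2) = C (n + 2 : ℝ) by simp [map_ofNat]]
      exact C_ne_zero.mpr (by positivity)
    push_cast
    constructor
    · refine mul_left_cancel₀ hne ?_
      linear_combination hrec' - (n + 1 : ℝ[X]) * hb
    · refine mul_left_cancel₀ hne ?_
      linear_combination -X * hrec' + (n + 2 : ℝ[X]) * hrec - (n + 1 : ℝ[X]) * ha
        + (2 * n + 3 : ℝ[X]) * (ha + X * hb)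

theorem legendre_differential_equation (n : ℕ) :
    derivative ((X ^ 2 - 1) * derivative (legendrePoly n)) =
      (n : ℝ[X]) * ((n : ℝ[X]) + 1) * legendrePoly n := by
  cases n with
  | zero => simp [legendrePoly]
  | succ n =>
    obtain ⟨ha, hb⟩ := derivative_legendrePoly_recurrences n
    have hc : (X ^ 2 - 1) * derivative (legendrePoly (n + 1)) =
        ((n : ℝ[X]) + 1) * (X * legendrePoly (n + 1) - legendrePoly n) := by
      linear_combination -ha - X * hb
    rw [hc]
    simp only [derivative_mul, derivative_add, derivative_sub, derivative_natCast,
      derivative_one, derivative_X, zero_mul, add_zero, one_mul, zero_add]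
    push_cast
    linear_combination (-((n : ℝ[X]) + 1)) * hb

theorem Polynomial.integral_eval_derivative (p : ℝ[X]) (a b : ℝ) :
    ∫ t in a..b, (derivative p).eval t = p.eval b - p.eval a :=
  intervalIntegral.integral_eq_sub_of_hasDerivAt (fun t _ => p.hasDerivAt t)
    (p.derivative.continuous.intervalIntegrable a b)

theorem integral_legendrePoly {n : ℕ} (hn : n ≠ 0) :
    ∫ t in (-1 : ℝ)..1, (legendrePoly n).eval t = 0 := by
  have hc : (n : ℝ) * (n + 1) ≠ 0 := by positivity
  have h := integral_eval_derivative ((X ^ 2 - 1) * derivative (legendrePoly n)) (-1) 1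
  simp only [legendre_differential_equation, eval_mul, eval_add, eval_sub, eval_pow, eval_X,
    eval_natCast, eval_one, intervalIntegral.integral_const_mul] at h
  refine (mul_eq_zero.mp ?_).resolve_left hc
  rw [h]
  norm_num

theorem integral_one_add_mul_derivative_legendrePoly {n : ℕ} (hn : n ≠ 0) :
    ∫ t in (-1 : ℝ)..1, (1 + t) * (derivative (legendrePoly n)).eval t = 2 := by
  have h := integral_eval_derivative ((1 + X) * legendrePoly n) (-1) 1
  simp only [derivative_mul, derivative_add, derivative_one, derivative_X, zero_add, one_mul,
    eval_add, eval_mul, eval_one, eval_X] at h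
  rw [intervalIntegral.integral_add ((legendrePoly n).continuous.intervalIntegrable _ _)
    (Continuous.intervalIntegrable (by fun_prop) _ _), integral_legendrePoly hn,
    eval_one_legendrePoly] at h
  linarith

theorem integral_legendrePoly_div_sub {n : ℕ} (hn : n ≠ 0) {x : ℝ} (hx : 1 < x) :
    ∫ t in (-1 : ℝ)..1, (legendrePoly n).eval t / (x - t) =
      ((n : ℝ) * (n + 1))⁻¹ *
        ∫ t in (-1 : ℝ)..1, (1 - t ^ 2) * (derivative (legendrePoly n)).eval t / (x - t) ^ 2 := by
  have hc : (n : ℝ) * (n + 1) ≠ 0 := by positivity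
  have hxt : ∀ t ∈ uIcc (-1 : ℝ) 1, x - t ≠ 0 := fun t ht => by
    rw [uIcc_of_le (by norm_num)] at ht
    linarith [ht.2]
  have hv : ∀ t ∈ uIcc (-1 : ℝ) 1, HasDerivAt (fun t => (x - t)⁻¹) ((x - t) ^ 2)⁻¹ t := by
    intro t ht
    simpa using ((hasDerivAt_id t).const_sub x).fun_inv (hxt t ht)
  have hparts := intervalIntegral.integral_mul_deriv_eq_deriv_mul
    (fun t _ => ((X ^ 2 - 1) * derivative (legendrePoly n)).hasDerivAt t) hv
    ((Polynomial.continuous _).intervalIntegrable _ _)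
    (((continuous_const.sub continuous_id).pow 2).continuousOn.inv₀
      fun t ht => pow_ne_zero 2 (hxt t ht)).intervalIntegrable
  simp only [legendre_differential_equation, eval_mul, eval_sub, eval_pow, eval_X, eval_one,
    eval_natCast, eval_add] at hparts
  norm_num [← div_eq_mul_inv, mul_div_assoc] at hparts
  rw [eq_inv_mul_iff_mul_eq₀ hc, ← neg_neg (_ * _), ← hparts, ← intervalIntegral.integral_neg]
  congr 1 with t
  ring

theorem hasDerivAt_div_sub {a t x : ℝ} (hx : t < x) :
    HasDerivAt (fun y => (t - a) / (y - t)) ((a - t) / (x - t) ^ 2) x := by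
  refine ((hasDerivAt_const x (t - a)).fun_div ((hasDerivAt_id' x).sub_const t)
    (sub_ne_zero.mpr hx.ne')).congr_deriv ?_
  ring

theorem tendsto_div_sub_atTop_zero (a t : ℝ) :
    Tendsto (fun x => (t - a) / (x - t)) atTop (𝓝 0) :=
  tendsto_const_nhds.div_atTop (tendsto_atTop_add_const_right _ _ tendsto_id)

theorem integral_Ioi_div_sub_sq {a t : ℝ} (ht : t < a) :
    ∫ x in Ioi a, (a - t) / (x - t) ^ 2 = 1 := by
  rw [integral_Ioi_of_hasDerivAt_of_nonneg' (fun _ hx => hasDerivAt_div_sub (ht.trans_le hx))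
    (fun _ _ => div_nonneg (sub_nonneg.mpr ht.le) (sq_nonneg _)) (tendsto_div_sub_atTop_zero a t),
    zero_sub, ← neg_div, neg_sub, div_self (sub_ne_zero.mpr ht.ne')]

theorem integral_integral_mul_of_integral_eq_one {α β : Type*} [MeasurableSpace α]
    [MeasurableSpace β] {μ : Measure α} {ν : Measure β} [SFinite μ] [SFinite ν]
    {g : β → ℝ} {k : α → β → ℝ}
    (hmeas : AEStronglyMeasurable (Function.uncurry fun x t => g t * k x t) (μ.prod ν))
    (hg : Integrable g ν) (hk_nonneg : ∀ᵐ t ∂ν, 0 ≤ᵐ[μ] fun x => k x t)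
    (hk_one : ∀ᵐ t ∂ν, ∫ x, k x t ∂μ = 1) :
    ∫ x, ∫ t, g t * k x t ∂ν ∂μ = ∫ t, g t ∂ν := by
  have hnorm : ∀ᵐ t ∂ν, ∫ x, ‖g t * k x t‖ ∂μ = ‖g t‖ := by
    filter_upwards [hk_nonneg, hk_one] with t hk0 hk1
    simp_rw [norm_mul, integral_const_mul]
    rw [integral_congr_ae (hk0.mono fun x hx => Real.norm_of_nonneg hx), hk1, mul_one]
  have hint : Integrable (Function.uncurry fun x t => g t * k x t) (μ.prod ν) := by
    rw [integrable_prod_iff' hmeas]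
    refine ⟨?_, hg.norm.congr (hnorm.mono fun t ht => ht.symm)⟩
    filter_upwards [hk_one] with t ht
    exact (Integrable.of_integral_ne_zero (ht ▸ one_ne_zero)).const_mul (g t)
  rw [integral_integral_swap hint]
  refine integral_congr_ae ?_
  filter_upwards [hk_one] with t ht
  rw [integral_const_mul, ht, mul_one]

theorem integral_Ioi_integral_Ioo_mul_div_sub_sq {a b : ℝ} {g : ℝ → ℝ} (hg : Continuous g) :
    ∫ x in Ioi b, ∫ t in Ioo a b, g t * ((b - t) / (x - t) ^ 2) = ∫ t in Ioo a b, g t := by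
  have hmem : ∀ᵐ t ∂volume.restrict (Ioo a b), t ∈ Ioo a b := ae_restrict_mem measurableSet_Ioo
  refine integral_integral_mul_of_integral_eq_one
    (by fun_prop : Measurable _).aestronglyMeasurable
    (hg.integrableOn_Icc.mono_set Ioo_subset_Icc_self) ?_ ?_
  · filter_upwards [hmem] with t ht
    exact Eventually.of_forall fun x => div_nonneg (sub_nonneg.mpr ht.2.le) (sq_nonneg _)
  · filter_upwards [hmem] with t ht using integral_Ioi_div_sub_sq ht.2

theorem legendreQ_eq_integral {n : ℕ} (hn : n ≠ 0) {x : ℝ} (hx : 1 < x) :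
    legendreQ n x = (2 * ((n : ℝ) * (n + 1)))⁻¹ *
      ∫ t in Ioo (-1 : ℝ) 1, (1 + t) * (derivative (legendrePoly n)).eval t *
        ((1 - t) / (x - t) ^ 2) := by
  simp_rw [legendreQ, ← eval_legendrePoly, integral_legendrePoly_div_sub hn hx,
    intervalIntegral.integral_of_le (show (-1 : ℝ) ≤ 1 by norm_num), integral_Ioc_eq_integral_Ioo]
  rw [← mul_assoc, one_div, ← mul_inv]
  congr 2
  funext t
  ring

theorem integral_legendreQ (l : ℕ) (hl : 1 ≤ l) :
    ∫ x in Set.Ioi (1 : ℝ), legendreQ l x = 1 / ((l : ℝ) * ((l : ℝ) + 1)) := by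
  have hl0 : l ≠ 0 := by omega
  rw [setIntegral_congr_fun measurableSet_Ioi fun _ hx => legendreQ_eq_integral hl0 hx,
    integral_const_mul, integral_Ioi_integral_Ioo_mul_div_sub_sq (by fun_prop),
    ← integral_Ioc_eq_integral_Ioo, ← intervalIntegral.integral_of_le (by norm_num),
    integral_one_add_mul_derivative_legendrePoly hl0]
  field_simp
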